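/- For all vertex-disjoint finite simple graphs G₁ and G₂ and vertices v ∈ V(G₁), w ∈ V(G₂), it holds that tw(G₁ ⊕_{v,w} G₂) = max(tw(G₁), tw(G₂)) and max(pw(G₁), pw(G₂)) ≤ pw(G₁ ⊕_{v,w} G₂) ≤ max(pw(G₁), pw(G₂)) + 1, where G₁ ⊕_{v,w} G₂ is the 1-sum of G₁ and G₂ at v and w. -/

import Mathlib

open SimpleGraph

/-- `(T, X)` is a tree-decomposition of the graph `G`. -/
def IsTreeDecomp {V ι : Type} (G : SimpleGraph V) (T : SimpleGraph ι)
    (X : ι → Finset V) : Prop :=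
  T.IsTree ∧
  (∀ v : V, ∃ u : ι, v ∈ X u) ∧
  (∀ v w : V, G.Adj v w → ∃ u : ι, v ∈ X u ∧ w ∈ X u) ∧
  (∀ v : V, (T.induce {u : ι | v ∈ X u}).Connected)

/-- The tree-width of `G`: the minimum over all tree-decompositions of
(maximum bag size − 1). -/
noncomputable def treewidth {V : Type} (G : SimpleGraph V) : ℕ :=
  sInf { k | ∃ (ι : Type) (T : SimpleGraph ι) (X : ι → Finset V),
    IsTreeDecomp G T X ∧ sSup (Set.range fun u => (X u).card) - 1 = k }

/-- `X` is a path-decomposition of the graph `G`. -/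
def IsPathDecomp {V : Type} {r : ℕ} (G : SimpleGraph V) (X : Fin r → Finset V) : Prop :=
  (∀ v : V, ∃ i, v ∈ X i) ∧
  (∀ v w : V, G.Adj v w → ∃ i, v ∈ X i ∧ w ∈ X i) ∧
  (∀ i j l : Fin r, i < j → j < l → ∀ x, x ∈ X i → x ∈ X l → x ∈ X j)

/-- The path-width of `G`: the minimum over all path-decompositions of
(maximum bag size − 1). -/
noncomputable def pathwidth {V : Type} (G : SimpleGraph V) : ℕ :=
  sInf { k | ∃ (r : ℕ) (X : Fin r → Finset V),
    IsPathDecomp G X ∧ sSup (Set.range fun i => (X i).card) - 1 = k }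

/-- `oneSum G₁ G₂ v w` is the 1-sum `G₁ ⊕_{v,w} G₂`: the disjoint union of `G₁` and `G₂`
with `v` and `w` identified to a single new vertex (modelled as `none`) adjacent to all
vertices of `N_{G₁}(v) ∪ N_{G₂}(w)`. -/
def oneSum {V₁ V₂ : Type} (G₁ : SimpleGraph V₁) (G₂ : SimpleGraph V₂) (v : V₁) (w : V₂) :
    SimpleGraph (Option ({x : V₁ // x ≠ v} ⊕ {y : V₂ // y ≠ w})) where
  Adj x y :=
    match x, y with
    | some (.inl a), some (.inl b) => G₁.Adj a.1 b.1
    | some (.inr a), some (.inr b) => G₂.Adj a.1 b.1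
    | some (.inl a), none => G₁.Adj a.1 v
    | none, some (.inl b) => G₁.Adj b.1 v
    | some (.inr a), none => G₂.Adj a.1 w
    | none, some (.inr b) => G₂.Adj b.1 w
    | _, _ => False
  symm := by
    constructor
    rintro (_ | a | a) (_ | b | b) h <;> simp_all [SimpleGraph.adj_comm]
  loopless := by
    constructor
    rintro (_ | a | a) h <;> simp_all

/-!
The 1-sum is the union of a copy of `G₁` and a copy of `G₂` that share only the identified
vertex `z`. Both widths are monotone under taking subgraphs, since a decomposition pulls back
along a copy without growing its bags; this gives the lower bounds. For the upper bounds,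
tree-decompositions of `G₁` and `G₂` are glued by one new tree edge between a node whose bag
contains `v` and a node whose bag contains `w`, so the nodes whose bags contain `z` still form
a subtree. Path-decompositions can only be concatenated, and then the bags containing `z` need
not be consecutive; adding `z` to every bag repairs this at the cost of one.
-/

namespace SimpleGraph

variable {V W : Type*} {G : SimpleGraph V} {H : SimpleGraph W}

lemma Reachable.of_sum_inl {a b : V} (h : (G ⊕g H).Reachable (.inl a) (.inl b)) :
    G.Reachable a b := by
  obtain ⟨p⟩ := h
  suffices ∀ {x y} (p : (G ⊕g H).Walk x y) {a b}, x = .inl a → y = .inl b → G.Reachable a b from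
    this p rfl rfl
  intro x y p
  induction p with
  | nil => rintro a b rfl hb; cases hb; rfl
  | @cons x m y hxm p ih =>
    rintro a b rfl rfl
    obtain c | c := m
    · exact Adj.reachable (sum_adj_inl.mp hxm) |>.trans (ih rfl rfl)
    · exact absurd hxm (not_adj_sum_inl_inr _ _)

lemma Reachable.of_sum_inr {a b : W} (h : (G ⊕g H).Reachable (.inr a) (.inr b)) :
    H.Reachable a b :=
  (h.map (Iso.sumComm (G := G) (H := H)).toHom).of_sum_inl

lemma IsAcyclic.sum (hG : G.IsAcyclic) (hH : H.IsAcyclic) : (G ⊕g H).IsAcyclic := by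
  rw [isAcyclic_iff_forall_adj_isBridge] at hG hH ⊢
  rintro (a | a) (b | b) hab
  · intro hr
    have hle : (G ⊕g H).deleteEdges {s(.inl a, .inl b)} ≤ G.deleteEdges {s(a, b)} ⊕g H := by
      rintro (x | x) (y | y) hxy <;> simp_all [deleteEdges_adj]
    exact isBridge_iff.mp (hG (sum_adj_inl.mp hab)) (hr.mono hle).of_sum_inl
  · exact absurd hab (not_adj_sum_inl_inr _ _)
  · exact absurd hab.symm (not_adj_sum_inl_inr _ _)
  · intro hr
    have hle : (G ⊕g H).deleteEdges {s(.inr a, .inr b)} ≤ G ⊕g H.deleteEdges {s(a, b)} := by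
      rintro (x | x) (y | y) hxy <;> simp_all [deleteEdges_adj]
    exact isBridge_iff.mp (hH (sum_adj_inr.mp hab)) (hr.mono hle).of_sum_inr

lemma IsTree.sum_sup_edge (hG : G.IsTree) (hH : H.IsTree) (v : V) (w : W) :
    ((G ⊕g H) ⊔ edge (Sum.inl v) (Sum.inr w)).IsTree :=
  ⟨hG.connected.sum_sup_edge hH.connected,
    (hG.isAcyclic.sum hH.isAcyclic).sup_edge_of_not_reachable (not_reachable_sum_inl_inr v w)⟩

lemma preconnected_induce_sum_sup_edge {v : V} {w : W} {S : Set (V ⊕ W)}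
    (hG : (G.induce (Sum.inl ⁻¹' S)).Preconnected) (hH : (H.induce (Sum.inr ⁻¹' S)).Preconnected)
    (hcross : ∀ a b, Sum.inl a ∈ S → Sum.inr b ∈ S → Sum.inl v ∈ S ∧ Sum.inr w ∈ S) :
    (((G ⊕g H) ⊔ edge (Sum.inl v) (Sum.inr w)).induce S).Preconnected := by
  set T := (G ⊕g H) ⊔ edge (Sum.inl v) (Sum.inr w)
  let φG : G.induce (Sum.inl ⁻¹' S) →g T.induce S :=
    induceHom ((Hom.ofLE le_sup_left).comp Embedding.sumInl.toHom) fun _ h => h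
  let φH : H.induce (Sum.inr ⁻¹' S) →g T.induce S :=
    induceHom ((Hom.ofLE le_sup_left).comp Embedding.sumInr.toHom) fun _ h => h
  have hcross' : ∀ a b (ha : Sum.inl a ∈ S) (hb : Sum.inr b ∈ S),
      (T.induce S).Reachable ⟨_, ha⟩ ⟨_, hb⟩ := by
    intro a b ha hb
    obtain ⟨hv, hw⟩ := hcross a b ha hb
    have hvw : (T.induce S).Adj ⟨_, hv⟩ ⟨_, hw⟩ := by simp [T, edge]
    exact ((hG ⟨a, ha⟩ ⟨v, hv⟩).map φG).trans (hvw.reachable.trans ((hH ⟨w, hw⟩ ⟨b, hb⟩).map φH))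
  rintro ⟨a | a, ha⟩ ⟨b | b, hb⟩
  · exact (hG ⟨a, ha⟩ ⟨b, hb⟩).map φG
  · exact hcross' a b ha hb
  · exact (hcross' b a hb ha).symm
  · exact (hH ⟨a, ha⟩ ⟨b, hb⟩).map φH

end SimpleGraph

section Width

variable {V : Type} {G : SimpleGraph V}

lemma sSup_range_card_sub_one_le {ι : Type} {X : ι → Finset V} {k : ℕ}
    (hk : ∀ u, (X u).card ≤ k + 1) : sSup (Set.range fun u => (X u).card) - 1 ≤ k := by
  have : sSup (Set.range fun u => (X u).card) ≤ k + 1 := csSup_le' (Set.forall_mem_range.2 hk)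
  omega

lemma card_le_sSup_range_card_sub_one_add_one [Finite V] {ι : Type} (X : ι → Finset V) (i : ι) :
    (X i).card ≤ sSup (Set.range fun u => (X u).card) - 1 + 1 := by
  have : Fintype V := Fintype.ofFinite V
  have : (X i).card ≤ sSup (Set.range fun u => (X u).card) :=
    le_csSup ⟨Fintype.card V, Set.forall_mem_range.2 fun u => (X u).card_le_univ⟩ ⟨i, rfl⟩
  omega

lemma treewidth_le_of_isTreeDecomp {ι : Type} {T : SimpleGraph ι} {X : ι → Finset V} {k : ℕ}
    (hX : IsTreeDecomp G T X) (hk : ∀ u, (X u).card ≤ k + 1) : treewidth G ≤ k :=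
  (Nat.sInf_le ⟨ι, T, X, hX, rfl⟩ : treewidth G ≤ _).trans (sSup_range_card_sub_one_le hk)

lemma isTreeDecomp_univ [Fintype V] (G : SimpleGraph V) :
    IsTreeDecomp G (⊥ : SimpleGraph Unit) fun _ => Finset.univ :=
  ⟨.of_subsingleton, fun x => ⟨(), Finset.mem_univ x⟩,
    fun x y _ => ⟨(), Finset.mem_univ x, Finset.mem_univ y⟩,
    fun x => (connected_iff _).2 ⟨.of_subsingleton, ⟨⟨(), Finset.mem_univ x⟩⟩⟩⟩

lemma exists_isTreeDecomp_card_le [Finite V] (G : SimpleGraph V) :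
    ∃ (ι : Type) (T : SimpleGraph ι) (X : ι → Finset V),
      IsTreeDecomp G T X ∧ ∀ u, (X u).card ≤ treewidth G + 1 := by
  have : Fintype V := Fintype.ofFinite V
  obtain ⟨ι, T, X, hX, hw⟩ : treewidth G ∈ _ :=
    Nat.sInf_mem ⟨_, Unit, ⊥, _, isTreeDecomp_univ G, rfl⟩
  exact ⟨ι, T, X, hX, fun u => hw ▸ card_le_sSup_range_card_sub_one_add_one X u⟩

lemma pathwidth_le_of_isPathDecomp {r : ℕ} {X : Fin r → Finset V} {k : ℕ}
    (hX : IsPathDecomp G X) (hk : ∀ i, (X i).card ≤ k + 1) : pathwidth G ≤ k :=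
  (Nat.sInf_le ⟨r, X, hX, rfl⟩ : pathwidth G ≤ _).trans (sSup_range_card_sub_one_le hk)

lemma isPathDecomp_univ [Fintype V] (G : SimpleGraph V) :
    IsPathDecomp G fun _ : Fin 1 => Finset.univ :=
  ⟨fun x => ⟨0, Finset.mem_univ x⟩, fun x y _ => ⟨0, Finset.mem_univ x, Finset.mem_univ y⟩,
    fun i j _ hij hjl => by omega⟩

lemma exists_isPathDecomp_card_le [Finite V] (G : SimpleGraph V) :
    ∃ (r : ℕ) (X : Fin r → Finset V), IsPathDecomp G X ∧ ∀ i, (X i).card ≤ pathwidth G + 1 := by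
  have : Fintype V := Fintype.ofFinite V
  obtain ⟨r, X, hX, hw⟩ : pathwidth G ∈ _ := Nat.sInf_mem ⟨_, 1, _, isPathDecomp_univ G, rfl⟩
  exact ⟨r, X, hX, fun i => hw ▸ card_le_sSup_range_card_sub_one_add_one X i⟩

end Width

section Monotone

variable {V W : Type} {G : SimpleGraph V} {H : SimpleGraph W}

lemma IsTreeDecomp.comap {ι : Type} {T : SimpleGraph ι} {X : ι → Finset W} (f : Copy G H)
    (hX : IsTreeDecomp H T X) : IsTreeDecomp G T fun u => (X u).preimage f f.injective.injOn := by
  obtain ⟨hT, hcov, hadj, hconn⟩ := hX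
  refine ⟨hT, fun x => ?_, fun x y hxy => ?_, fun x => ?_⟩
  · obtain ⟨u, hu⟩ := hcov (f x)
    exact ⟨u, Finset.mem_preimage.2 hu⟩
  · obtain ⟨u, hx, hy⟩ := hadj _ _ (f.toHom.map_adj hxy)
    exact ⟨u, Finset.mem_preimage.2 hx, Finset.mem_preimage.2 hy⟩
  · have hs : {u | x ∈ (X u).preimage f f.injective.injOn} = {u | f x ∈ X u} :=
      Set.ext fun _ => Finset.mem_preimage
    exact hs ▸ hconn (f x)

lemma IsPathDecomp.comap {r : ℕ} {X : Fin r → Finset W} (f : Copy G H) (hX : IsPathDecomp H X) :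
    IsPathDecomp G fun i => (X i).preimage f f.injective.injOn := by
  obtain ⟨hcov, hadj, hcons⟩ := hX
  refine ⟨fun x => ?_, fun x y hxy => ?_, fun i j l hij hjl x hi hl => ?_⟩
  · obtain ⟨i, hi⟩ := hcov (f x)
    exact ⟨i, Finset.mem_preimage.2 hi⟩
  · obtain ⟨i, hx, hy⟩ := hadj _ _ (f.toHom.map_adj hxy)
    exact ⟨i, Finset.mem_preimage.2 hx, Finset.mem_preimage.2 hy⟩
  · rw [Finset.mem_preimage] at hi hl ⊢
    exact hcons i j l hij hjl _ hi hl

lemma SimpleGraph.Copy.card_preimage_le (f : Copy G H) (s : Finset W) :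
    (s.preimage f f.injective.injOn).card ≤ s.card :=
  Finset.card_le_card_of_injOn f (fun _ hx => Finset.mem_preimage.1 hx) f.injective.injOn

lemma SimpleGraph.IsContained.treewidth_le [Finite W] (h : G ⊑ H) : treewidth G ≤ treewidth H := by
  obtain ⟨f⟩ := h
  obtain ⟨ι, T, X, hX, hcard⟩ := exists_isTreeDecomp_card_le H
  exact treewidth_le_of_isTreeDecomp (hX.comap f) fun u => (f.card_preimage_le _).trans (hcard u)

lemma SimpleGraph.IsContained.pathwidth_le [Finite W] (h : G ⊑ H) : pathwidth G ≤ pathwidth H := by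
  obtain ⟨f⟩ := h
  obtain ⟨r, X, hX, hcard⟩ := exists_isPathDecomp_card_le H
  exact pathwidth_le_of_isPathDecomp (hX.comap f) fun i => (f.card_preimage_le _).trans (hcard i)

end Monotone

lemma preconnected_induce_mem_map {V W ι : Type} {T : SimpleGraph ι} {X : ι → Finset V}
    (f : V ↪ W) (hX : ∀ x, (T.induce {u | x ∈ X u}).Connected) (z : W) :
    (T.induce {u | z ∈ (X u).map f}).Preconnected := by
  rintro ⟨u, hu⟩ ⟨u', hu'⟩
  obtain ⟨x, hx, rfl⟩ := Finset.mem_map.1 hu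
  have hx' : x ∈ X u' := Finset.mem_map' f |>.1 hu'
  exact ((hX x).preconnected ⟨u, hx⟩ ⟨u', hx'⟩).map
    (induceHom .id fun _ => Finset.mem_map_of_mem f)

def ConsecutiveBags {α : Type} {r : ℕ} (X : Fin r → Finset α) : Prop :=
  ∀ i j l : Fin r, i < j → j < l → ∀ x, x ∈ X i → x ∈ X l → x ∈ X j

lemma ConsecutiveBags.insert_append {α : Type} [DecidableEq α] {m n : ℕ} {X₁ : Fin m → Finset α}
    {X₂ : Fin n → Finset α} (h₁ : ConsecutiveBags X₁) (h₂ : ConsecutiveBags X₂) {z : α}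
    (hinter : ∀ i j x, x ∈ X₁ i → x ∈ X₂ j → x = z) :
    ConsecutiveBags fun k => insert z (Fin.append X₁ X₂ k) := by
  intro i j l hij hjl x hi hl
  rw [Finset.mem_insert] at hi hl ⊢
  by_cases hxz : x = z
  · exact .inl hxz
  right
  replace hi := hi.resolve_left hxz
  replace hl := hl.resolve_left hxz
  induction i using Fin.addCases <;> induction j using Fin.addCases <;>
    induction l using Fin.addCases <;>
    simp only [Fin.append_left, Fin.append_right, Fin.lt_def, Fin.val_castAdd,
      Fin.val_natAdd] at hi hl hij hjl ⊢
  all_goals first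
    | omega
    | exact absurd (hinter _ _ x hi hl) hxz
    | exact h₁ _ _ _ hij hjl x hi hl
    | exact h₂ _ _ _ (by omega) (by omega) x hi hl

section SupMap

variable {V₁ V₂ W : Type} {G₁ : SimpleGraph V₁} {G₂ : SimpleGraph V₂} {f₁ : V₁ ↪ W} {f₂ : V₂ ↪ W}
  {v : V₁} {w : V₂}

lemma IsTreeDecomp.sup_map {ι₁ ι₂ : Type} {T₁ : SimpleGraph ι₁} {T₂ : SimpleGraph ι₂}
    {X₁ : ι₁ → Finset V₁} {X₂ : ι₂ → Finset V₂} {u₁ : ι₁} {u₂ : ι₂}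
    (h₁ : IsTreeDecomp G₁ T₁ X₁) (h₂ : IsTreeDecomp G₂ T₂ X₂)
    (hcover : ∀ z, (∃ x, f₁ x = z) ∨ ∃ y, f₂ y = z) (hinter : ∀ x y, f₁ x = f₂ y → x = v ∧ y = w)
    (hv : v ∈ X₁ u₁) (hw : w ∈ X₂ u₂) :
    IsTreeDecomp (G₁.map f₁ ⊔ G₂.map f₂) ((T₁ ⊕g T₂) ⊔ edge (Sum.inl u₁) (Sum.inr u₂))
      (Sum.elim (fun u => (X₁ u).map f₁) fun u => (X₂ u).map f₂) := by
  obtain ⟨hT₁, hcov₁, hadj₁, hconn₁⟩ := h₁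
  obtain ⟨hT₂, hcov₂, hadj₂, hconn₂⟩ := h₂
  have hcov : ∀ z, ∃ u, z ∈ Sum.elim (fun u => (X₁ u).map f₁) (fun u => (X₂ u).map f₂) u := by
    intro z
    rcases hcover z with ⟨x, rfl⟩ | ⟨y, rfl⟩
    · obtain ⟨u, hu⟩ := hcov₁ x
      exact ⟨.inl u, Finset.mem_map_of_mem f₁ hu⟩
    · obtain ⟨u, hu⟩ := hcov₂ y
      exact ⟨.inr u, Finset.mem_map_of_mem f₂ hu⟩
  refine ⟨hT₁.sum_sup_edge hT₂ u₁ u₂, hcov, ?_, fun z => ?_⟩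
  · rintro _ _ (⟨-, x, y, hxy, rfl, rfl⟩ | ⟨-, x, y, hxy, rfl, rfl⟩)
    · obtain ⟨u, hx, hy⟩ := hadj₁ x y hxy
      exact ⟨.inl u, Finset.mem_map_of_mem f₁ hx, Finset.mem_map_of_mem f₁ hy⟩
    · obtain ⟨u, hx, hy⟩ := hadj₂ x y hxy
      exact ⟨.inr u, Finset.mem_map_of_mem f₂ hx, Finset.mem_map_of_mem f₂ hy⟩
  obtain ⟨u, hu⟩ := hcov z
  refine (connected_iff _).2 ⟨preconnected_induce_sum_sup_edge
    (preconnected_induce_mem_map f₁ hconn₁ z) (preconnected_induce_mem_map f₂ hconn₂ z)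
    fun a b ha hb => ?_, ⟨⟨u, hu⟩⟩⟩
  obtain ⟨x, -, rfl⟩ := Finset.mem_map.1 ha
  obtain ⟨y, -, hyx⟩ := Finset.mem_map.1 hb
  obtain ⟨rfl, rfl⟩ := hinter x y hyx.symm
  exact ⟨Finset.mem_map_of_mem f₁ hv, hyx ▸ Finset.mem_map_of_mem f₂ hw⟩

lemma treewidth_sup_map_le [Finite V₁] [Finite V₂]
    (hcover : ∀ z, (∃ x, f₁ x = z) ∨ ∃ y, f₂ y = z) (hinter : ∀ x y, f₁ x = f₂ y → x = v ∧ y = w) :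
    treewidth (G₁.map f₁ ⊔ G₂.map f₂) ≤ max (treewidth G₁) (treewidth G₂) := by
  obtain ⟨ι₁, T₁, X₁, h₁, hcard₁⟩ := exists_isTreeDecomp_card_le G₁
  obtain ⟨ι₂, T₂, X₂, h₂, hcard₂⟩ := exists_isTreeDecomp_card_le G₂
  obtain ⟨u₁, hv⟩ := h₁.2.1 v
  obtain ⟨u₂, hw⟩ := h₂.2.1 w
  refine treewidth_le_of_isTreeDecomp (h₁.sup_map h₂ hcover hinter hv hw) ?_
  rintro (u | u) <;> simp only [Sum.elim_inl, Sum.elim_inr, Finset.card_map]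
  · exact (hcard₁ u).trans (by omega)
  · exact (hcard₂ u).trans (by omega)

lemma IsPathDecomp.sup_map [DecidableEq W] {r₁ r₂ : ℕ} {X₁ : Fin r₁ → Finset V₁}
    {X₂ : Fin r₂ → Finset V₂} (h₁ : IsPathDecomp G₁ X₁) (h₂ : IsPathDecomp G₂ X₂)
    (hcover : ∀ z, (∃ x, f₁ x = z) ∨ ∃ y, f₂ y = z) (hinter : ∀ x y, f₁ x = f₂ y → x = v ∧ y = w) :
    IsPathDecomp (G₁.map f₁ ⊔ G₂.map f₂)
      fun k => insert (f₁ v) (Fin.append (fun i => (X₁ i).map f₁) (fun j => (X₂ j).map f₂) k) := by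
  obtain ⟨hcov₁, hadj₁, hcons₁⟩ := h₁
  obtain ⟨hcov₂, hadj₂, hcons₂⟩ := h₂
  refine ⟨fun z => ?_, ?_, ?_⟩
  · rcases hcover z with ⟨x, rfl⟩ | ⟨y, rfl⟩
    · obtain ⟨i, hi⟩ := hcov₁ x
      exact ⟨Fin.castAdd r₂ i, by simpa [Fin.append_left] using .inr hi⟩
    · obtain ⟨j, hj⟩ := hcov₂ y
      exact ⟨Fin.natAdd r₁ j, by simpa [Fin.append_right] using .inr hj⟩
  · rintro _ _ (⟨-, x, y, hxy, rfl, rfl⟩ | ⟨-, x, y, hxy, rfl, rfl⟩)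
    · obtain ⟨i, hx, hy⟩ := hadj₁ x y hxy
      exact ⟨Fin.castAdd r₂ i, by simp [Fin.append_left, hx, hy]⟩
    · obtain ⟨j, hx, hy⟩ := hadj₂ x y hxy
      exact ⟨Fin.natAdd r₁ j, by simp [Fin.append_right, hx, hy]⟩
  · refine ConsecutiveBags.insert_append (fun i j l hij hjl x hi hl => ?_)
      (fun i j l hij hjl x hi hl => ?_) fun i j z hi hj => ?_
    · obtain ⟨x, hx, rfl⟩ := Finset.mem_map.1 hi
      exact Finset.mem_map_of_mem f₁ (hcons₁ i j l hij hjl x hx ((Finset.mem_map' f₁).1 hl))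
    · obtain ⟨x, hx, rfl⟩ := Finset.mem_map.1 hi
      exact Finset.mem_map_of_mem f₂ (hcons₂ i j l hij hjl x hx ((Finset.mem_map' f₂).1 hl))
    · obtain ⟨x, -, rfl⟩ := Finset.mem_map.1 hi
      obtain ⟨y, -, hyx⟩ := Finset.mem_map.1 hj
      rw [(hinter x y hyx.symm).1]

lemma pathwidth_sup_map_le [Finite V₁] [Finite V₂]
    (hcover : ∀ z, (∃ x, f₁ x = z) ∨ ∃ y, f₂ y = z) (hinter : ∀ x y, f₁ x = f₂ y → x = v ∧ y = w) :
    pathwidth (G₁.map f₁ ⊔ G₂.map f₂) ≤ max (pathwidth G₁) (pathwidth G₂) + 1 := by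
  classical
  obtain ⟨r₁, X₁, h₁, hcard₁⟩ := exists_isPathDecomp_card_le G₁
  obtain ⟨r₂, X₂, h₂, hcard₂⟩ := exists_isPathDecomp_card_le G₂
  apply pathwidth_le_of_isPathDecomp (h₁.sup_map h₂ hcover hinter)
  intro k
  refine (Finset.card_insert_le _ _).trans ?_
  induction k using Fin.addCases with
  | left i =>
    rw [Fin.append_left, Finset.card_map]
    have := hcard₁ i
    omega
  | right j =>
    rw [Fin.append_right, Finset.card_map]
    have := hcard₂ j
    omega

end SupMap

namespace oneSum

variable {V₁ V₂ : Type} (v : V₁) (w : V₂)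

open Classical in
noncomputable def inl : V₁ ↪ Option ({x : V₁ // x ≠ v} ⊕ {y : V₂ // y ≠ w}) where
  toFun x := if h : x = v then none else some (.inl ⟨x, h⟩)
  inj' x y hxy := by
    by_cases hx : x = v <;> by_cases hy : y = v <;> simp_all

open Classical in
noncomputable def inr : V₂ ↪ Option ({x : V₁ // x ≠ v} ⊕ {y : V₂ // y ≠ w}) where
  toFun y := if h : y = w then none else some (.inr ⟨y, h⟩)
  inj' x y hxy := by
    by_cases hx : x = w <;> by_cases hy : y = w <;> simp_all

variable {v w}

lemma inl_self : inl v w v = none := dif_pos rfl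

lemma inl_of_ne {x : V₁} (hx : x ≠ v) : inl v w x = some (.inl ⟨x, hx⟩) := dif_neg hx

lemma inr_self : inr v w w = none := dif_pos rfl

lemma inr_of_ne {y : V₂} (hy : y ≠ w) : inr v w y = some (.inr ⟨y, hy⟩) := dif_neg hy

@[simp] lemma inl_eq_none_iff {x : V₁} : inl v w x = none ↔ x = v := by
  obtain rfl | hx := eq_or_ne x v <;> simp [inl_self, inl_of_ne, *]

@[simp] lemma inl_eq_some_inl_iff {x : V₁} {a : {x : V₁ // x ≠ v}} :
    inl v w x = some (.inl a) ↔ x = a := by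
  obtain rfl | hx := eq_or_ne x v <;> simp [inl_self, inl_of_ne, *, a.2.symm, Subtype.ext_iff]

@[simp] lemma inl_ne_some_inr {x : V₁} {b : {y : V₂ // y ≠ w}} : inl v w x ≠ some (.inr b) := by
  obtain rfl | hx := eq_or_ne x v <;> simp [inl_self, inl_of_ne, *]

@[simp] lemma inr_eq_none_iff {y : V₂} : inr v w y = none ↔ y = w := by
  obtain rfl | hy := eq_or_ne y w <;> simp [inr_self, inr_of_ne, *]

@[simp] lemma inr_eq_some_inr_iff {y : V₂} {b : {y : V₂ // y ≠ w}} :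
    inr v w y = some (.inr b) ↔ y = b := by
  obtain rfl | hy := eq_or_ne y w <;> simp [inr_self, inr_of_ne, *, b.2.symm, Subtype.ext_iff]

@[simp] lemma inr_ne_some_inl {y : V₂} {a : {x : V₁ // x ≠ v}} : inr v w y ≠ some (.inl a) := by
  obtain rfl | hy := eq_or_ne y w <;> simp [inr_self, inr_of_ne, *]

lemma inl_eq_inr_iff {x : V₁} {y : V₂} : inl v w x = inr v w y ↔ x = v ∧ y = w := by
  rcases h : inr v w y with _ | a | ⟨b, hb⟩ <;> simp_all

lemma exists_inl_or_inr (z : Option ({x : V₁ // x ≠ v} ⊕ {y : V₂ // y ≠ w})) :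
    (∃ x, inl v w x = z) ∨ ∃ y, inr v w y = z := by
  rcases z with _ | a | b <;> simp

end oneSum

theorem oneSum_eq_sup_map {V₁ V₂ : Type} (G₁ : SimpleGraph V₁) (G₂ : SimpleGraph V₂) (v : V₁)
    (w : V₂) : oneSum G₁ G₂ v w = G₁.map (oneSum.inl v w) ⊔ G₂.map (oneSum.inr v w) := by
  ext (_ | a | a) (_ | b | b) <;> simp [oneSum, map_adj, adj_comm]

section OneSum

variable {V₁ V₂ : Type} (G₁ : SimpleGraph V₁) (G₂ : SimpleGraph V₂) (v : V₁) (w : V₂)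

lemma left_isContained_oneSum : G₁ ⊑ oneSum G₁ G₂ v w :=
  oneSum_eq_sup_map G₁ G₂ v w ▸ IsContained.mono_right ⟨(Embedding.map _ G₁).toCopy⟩ le_sup_left

lemma right_isContained_oneSum : G₂ ⊑ oneSum G₁ G₂ v w :=
  oneSum_eq_sup_map G₁ G₂ v w ▸ IsContained.mono_right ⟨(Embedding.map _ G₂).toCopy⟩ le_sup_right

lemma treewidth_oneSum_le [Finite V₁] [Finite V₂] :
    treewidth (oneSum G₁ G₂ v w) ≤ max (treewidth G₁) (treewidth G₂) :=
  oneSum_eq_sup_map G₁ G₂ v w ▸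
    treewidth_sup_map_le oneSum.exists_inl_or_inr fun _ _ => oneSum.inl_eq_inr_iff.1

lemma pathwidth_oneSum_le [Finite V₁] [Finite V₂] :
    pathwidth (oneSum G₁ G₂ v w) ≤ max (pathwidth G₁) (pathwidth G₂) + 1 :=
  oneSum_eq_sup_map G₁ G₂ v w ▸
    pathwidth_sup_map_le oneSum.exists_inl_or_inr fun _ _ => oneSum.inl_eq_inr_iff.1

end OneSum

/-- For vertex-disjoint finite simple graphs `G₁`, `G₂` and vertices `v ∈ V(G₁)`,
`w ∈ V(G₂)`: `tw(G₁ ⊕_{v,w} G₂) = max(tw(G₁), tw(G₂))` and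
`max(pw(G₁), pw(G₂)) ≤ pw(G₁ ⊕_{v,w} G₂) ≤ max(pw(G₁), pw(G₂)) + 1`. -/
theorem treewidth_pathwidth_oneSum
    {V₁ V₂ : Type} [Fintype V₁] [Fintype V₂]
    (G₁ : SimpleGraph V₁) (G₂ : SimpleGraph V₂) (v : V₁) (w : V₂) :
    treewidth (oneSum G₁ G₂ v w) = max (treewidth G₁) (treewidth G₂) ∧
    (max (pathwidth G₁) (pathwidth G₂) ≤ pathwidth (oneSum G₁ G₂ v w) ∧
      pathwidth (oneSum G₁ G₂ v w) ≤ max (pathwidth G₁) (pathwidth G₂) + 1) :=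
  ⟨(treewidth_oneSum_le G₁ G₂ v w).antisymm <| max_le
      (left_isContained_oneSum G₁ G₂ v w).treewidth_le
      (right_isContained_oneSum G₁ G₂ v w).treewidth_le,
    max_le (left_isContained_oneSum G₁ G₂ v w).pathwidth_le
      (right_isContained_oneSum G₁ G₂ v w).pathwidth_le,
    pathwidth_oneSum_le G₁ G₂ v w⟩
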